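/- Let $d \ge 1$ and fix positive reals $h_1, \dots, h_d$ depending on $n$ through $h_i(n) = r_i 2^{-n}$ with fixed positive integers $r_i$; set $H_n = \prod_{i=1}^d h_i(n)$. For each $n$ let $u_n, v_n : \mathbb{Z}^d \to \mathbb{R}$ be finitely supported with $H_n \sum_k (u_{n,k})^2 \le c$ and $H_n \sum_k (v_{n,k})^2 \le c$ for a constant $c > 0$ independent of $n$, and let $\Phi_n u_n(x) = \sum_k u_{n,k} \prod_{i=1}^d \chi(x_i/h_i(n) - k_i)$ with $\chi(t) = \max(0,1-|t|)$. If for every $i$, $\lim_{n\to\infty} H_n \sum_k (u_{n,k+e_i} - u_{n,k})^2 = 0$, then $\lim_{n \to \infty} \Big( \int_{\mathbb{R}^d} \Phi_n v_n(x)\, \Phi_n u_n(x)\, dx \;-\; H_n \sum_{k} v_{n,k}\, u_{n,k} \Big) = 0$. -/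

import Mathlib

/-!
The hat functions satisfy `∫ ψₖ ψₗ = H ∏ᵢ a(lᵢ - kᵢ)` with `a(m) = ∫ χ(t) χ(t - m) dt`, which
vanishes for `|m| ≥ 2` and sums to `1` over `m ∈ {-1, 0, 1}` because the hats form a partition of
unity. Hence `∫ Φv Φu - H ∑ vₖ uₖ = H ∑ₘ wₘ ∑ₖ vₖ (uₖ₊ₘ - uₖ)` with convex weights `wₘ` on the cube
`{-1, 0, 1}ᵈ`. Writing `m` as a sum of at most `d` unit steps, Cauchy–Schwarz and the triangle
inequality in `ℓ²` bound this by `(H ∑ vₖ²)^{1/2} ∑ᵢ (H ∑ₖ (uₖ₊ₑᵢ - uₖ)²)^{1/2}`, which tends to `0`.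
-/

open BigOperators MeasureTheory Filter

noncomputable def chi (t : ℝ) : ℝ := max 0 (1 - |t|)

open Function

lemma chi_nonneg (t : ℝ) : 0 ≤ chi t := le_max_left _ _

lemma continuous_chi : Continuous chi := by
  unfold chi; fun_prop

lemma chi_eq_zero_of_one_le_abs {t : ℝ} (h : 1 ≤ |t|) : chi t = 0 := max_eq_left (by linarith)

lemma chi_of_abs_le_one {t : ℝ} (h : |t| ≤ 1) : chi t = 1 - |t| := max_eq_right (by linarith)

lemma support_chi_subset : support chi ⊆ Set.Ioo (-1) 1 := fun _ ht =>
  abs_lt.mp (not_le.mp fun h => ht (chi_eq_zero_of_one_le_abs h))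

lemma chi_mul_sum_neighbours (t : ℝ) : chi t * (chi (t + 1) + chi t + chi (t - 1)) = chi t := by
  rcases le_or_gt 1 |t| with h | h
  · rw [chi_eq_zero_of_one_le_abs h, zero_mul]
  obtain ⟨h₁, h₂⟩ := abs_lt.mp h
  suffices chi (t + 1) + chi t + chi (t - 1) = 1 by rw [this, mul_one]
  rcases le_total 0 t with ht | ht
  · rw [chi_eq_zero_of_one_le_abs (by rw [abs_of_nonneg (by linarith)]; linarith),
      chi_of_abs_le_one h.le, chi_of_abs_le_one (by rw [abs_le]; constructor <;> linarith),
      abs_of_nonneg ht, abs_of_nonpos (by linarith)]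
    ring
  · rw [chi_eq_zero_of_one_le_abs (t := t - 1) (by rw [abs_of_nonpos (by linarith)]; linarith),
      chi_of_abs_le_one h.le, chi_of_abs_le_one (by rw [abs_le]; constructor <;> linarith),
      abs_of_nonpos ht, abs_of_nonneg (by linarith)]
    ring

lemma integral_chi : ∫ t, chi t = 1 := by
  have hint := continuous_chi.intervalIntegrable (μ := volume)
  rw [← intervalIntegral.integral_eq_integral_of_support_subset
    (support_chi_subset.trans Set.Ioo_subset_Ioc_self),
    ← intervalIntegral.integral_add_adjacent_intervals (b := 0) (hint _ _) (hint _ _)]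
  have h₁ : ∫ t in (-1 : ℝ)..0, chi t = ∫ t in (-1 : ℝ)..0, (1 + t) := by
    refine intervalIntegral.integral_congr fun t ht => ?_
    rw [Set.uIcc_of_le (by norm_num)] at ht
    rw [chi_of_abs_le_one (abs_le.mpr ⟨ht.1, by linarith [ht.2]⟩), abs_of_nonpos ht.2]
    ring
  have h₂ : ∫ t in (0 : ℝ)..1, chi t = ∫ t in (0 : ℝ)..1, (1 - t) := by
    refine intervalIntegral.integral_congr fun t ht => ?_
    rw [Set.uIcc_of_le (by norm_num)] at ht
    rw [chi_of_abs_le_one (abs_le.mpr ⟨by linarith [ht.1], ht.2⟩), abs_of_nonneg ht.1]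
  rw [h₁, h₂,
    intervalIntegral.integral_add intervalIntegrable_const intervalIntegral.intervalIntegrable_id,
    intervalIntegral.integral_sub intervalIntegrable_const intervalIntegral.intervalIntegrable_id]
  norm_num

lemma integrable_chi_mul_chi_sub (c : ℝ) : Integrable fun t => chi t * chi (t - c) :=
  (continuous_chi.mul (continuous_chi.comp (continuous_sub_right c))).integrable_of_hasCompactSupport
    (.mul_right (HasCompactSupport.intro isCompact_Icc
      fun _ ht => by_contra fun h => ht (Set.Ioo_subset_Icc_self (support_chi_subset h))))

noncomputable def chiOverlap (m : ℤ) : ℝ := ∫ t, chi t * chi (t - m)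

lemma chiOverlap_nonneg (m : ℤ) : 0 ≤ chiOverlap m :=
  integral_nonneg fun t => mul_nonneg (chi_nonneg t) (chi_nonneg _)

lemma chiOverlap_eq_zero_of_two_le_abs {m : ℤ} (hm : 2 ≤ |m|) : chiOverlap m = 0 := by
  have hm' : (2 : ℝ) ≤ |(m : ℝ)| := by exact_mod_cast hm
  suffices ∀ t : ℝ, chi t * chi (t - m) = 0 by simp [chiOverlap, this]
  intro t
  rcases lt_or_ge |t| 1 with ht | ht
  · refine mul_eq_zero_of_right _ (chi_eq_zero_of_one_le_abs ?_)
    have := abs_sub_abs_le_abs_sub (m : ℝ) t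
    rw [abs_sub_comm] at this
    linarith
  · rw [chi_eq_zero_of_one_le_abs ht, zero_mul]

lemma sum_chiOverlap : ∑ m ∈ Finset.Icc (-1 : ℤ) 1, chiOverlap m = 1 := by
  have hsum (t : ℝ) : ∑ m ∈ Finset.Icc (-1 : ℤ) 1, chi t * chi (t - m) = chi t := by
    rw [show Finset.Icc (-1 : ℤ) 1 = {-1, 0, 1} by decide]
    simp
    linear_combination chi_mul_sum_neighbours t
  simp only [chiOverlap]
  rw [← integral_finsetSum _ fun (m : ℤ) _ => integrable_chi_mul_chi_sub m]
  simp only [hsum, integral_chi]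

lemma integral_chi_div_sub_mul_chi_div_sub {h : ℝ} (hh : 0 < h) (k l : ℤ) :
    ∫ t, chi (t / h - k) * chi (t / h - l) = h * chiOverlap (l - k) := by
  simp only [div_eq_mul_inv]
  rw [Measure.integral_comp_mul_right (fun y => chi (y - k) * chi (y - l)), inv_inv,
    abs_of_pos hh, smul_eq_mul, chiOverlap,
    ← integral_sub_right_eq_self (fun y => chi (y - k) * chi (y - l)) (-(k : ℝ))]
  congr 2 with t
  push_cast
  ring_nf

section HatBasis

variable {d : ℕ} (h : Fin d → ℝ)

noncomputable def hatBasis (k : Fin d → ℤ) (x : Fin d → ℝ) : ℝ :=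
  ∏ i, chi (x i / h i - k i)

lemma continuous_hatBasis (k : Fin d → ℤ) : Continuous (hatBasis h k) :=
  continuous_finsetProd _ fun i _ =>
    continuous_chi.comp (((continuous_apply i).div_const _).sub continuous_const)

variable {h}

lemma hasCompactSupport_hatBasis (hh : ∀ i, 0 < h i) (k : Fin d → ℤ) :
    HasCompactSupport (hatBasis h k) := by
  refine HasCompactSupport.intro (isCompact_univ_pi fun i =>
    isCompact_Icc (a := h i * (k i - 1)) (b := h i * (k i + 1))) fun x hx => ?_
  obtain ⟨i, hi⟩ := not_forall.mp (Set.mem_univ_pi.not.mp hx)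
  refine Finset.prod_eq_zero (Finset.mem_univ i) (chi_eq_zero_of_one_le_abs ?_)
  rw [Set.mem_Icc, ← div_le_iff₀' (hh i), ← le_div_iff₀' (hh i), not_and_or, not_le, not_le] at hi
  rw [le_abs]
  rcases hi with hi | hi
  · right; linarith
  · left; linarith

lemma integrable_hatBasis_mul (hh : ∀ i, 0 < h i) (k l : Fin d → ℤ) :
    Integrable fun x => hatBasis h k x * hatBasis h l x :=
  ((continuous_hatBasis h k).mul (continuous_hatBasis h l)).integrable_of_hasCompactSupport
    (hasCompactSupport_hatBasis hh k).mul_right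

lemma integral_hatBasis_mul (hh : ∀ i, 0 < h i) (k l : Fin d → ℤ) :
    ∫ x, hatBasis h k x * hatBasis h l x = (∏ i, h i) * ∏ i, chiOverlap (l i - k i) := by
  simp only [hatBasis, ← Finset.prod_mul_distrib]
  refine (integral_fintype_prod_eq_prod (μ := fun _ => volume)
    fun i t => chi (t / h i - k i) * chi (t / h i - l i)).trans ?_
  exact Finset.prod_congr rfl fun i _ => integral_chi_div_sub_mul_chi_div_sub (hh i) (k i) (l i)

end HatBasis

section FiniteSupport

variable {α : Type*} {f g : α → ℝ}

lemma finsum_sq_eq_sum {s : Finset α} (hs : support f ⊆ s) :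
    ∑ᶠ k, f k ^ 2 = ∑ k ∈ s, f k ^ 2 :=
  finsum_eq_sum_of_support_subset _ ((support_pow f two_ne_zero).subset.trans hs)

lemma support_subset_toFinset_union (hf : (support f).Finite) (hg : (support g).Finite) :
    support f ⊆ (hf.union hg).toFinset ∧ support g ⊆ (hf.union hg).toFinset := by
  simp only [Set.Finite.coe_toFinset]
  exact ⟨Set.subset_union_left, Set.subset_union_right⟩

lemma abs_finsum_mul_le (hf : (support f).Finite) (hg : (support g).Finite) :
    |∑ᶠ k, f k * g k| ≤ √(∑ᶠ k, f k ^ 2) * √(∑ᶠ k, g k ^ 2) := by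
  obtain ⟨hfs, hgs⟩ := support_subset_toFinset_union hf hg
  set s := (hf.union hg).toFinset
  rw [finsum_eq_sum_of_support_subset _ ((support_mul_subset_left f g).trans hfs),
    finsum_sq_eq_sum hfs, finsum_sq_eq_sum hgs, abs_le]
  refine ⟨?_, Real.sum_mul_le_sqrt_mul_sqrt s f g⟩
  have := Real.sum_mul_le_sqrt_mul_sqrt s (fun k => -f k) g
  simp only [neg_mul, Finset.sum_neg_distrib, neg_sq] at this
  linarith

lemma sqrt_finsum_add_sq_le (hf : (support f).Finite) (hg : (support g).Finite) :
    √(∑ᶠ k, (f k + g k) ^ 2) ≤ √(∑ᶠ k, f k ^ 2) + √(∑ᶠ k, g k ^ 2) := by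
  obtain ⟨hfs, hgs⟩ := support_subset_toFinset_union hf hg
  set s := (hf.union hg).toFinset
  have hfgs : support (fun k => f k + g k) ⊆ s :=
    (support_add f g).trans (Set.union_subset hfs hgs)
  rw [finsum_sq_eq_sum hfs, finsum_sq_eq_sum hgs, finsum_sq_eq_sum hfgs,
    Real.sqrt_le_left (by positivity)]
  have hexpand : ∑ k ∈ s, (f k + g k) ^ 2
      = ∑ k ∈ s, f k ^ 2 + 2 * ∑ k ∈ s, f k * g k + ∑ k ∈ s, g k ^ 2 := by
    simp only [add_sq, Finset.sum_add_distrib, Finset.mul_sum, mul_assoc]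
  have hcs := Real.sum_mul_le_sqrt_mul_sqrt s f g
  have hA := Real.sq_sqrt (Finset.sum_nonneg fun k (_ : k ∈ s) => sq_nonneg (f k))
  have hB := Real.sq_sqrt (Finset.sum_nonneg fun k (_ : k ∈ s) => sq_nonneg (g k))
  rw [hexpand]
  nlinarith

end FiniteSupport

section Translate

variable {G M : Type*} [AddGroup G]

lemma finsum_comp_add_right [AddCommMonoid M] (f : G → M) (a : G) :
    ∑ᶠ k, f (k + a) = ∑ᶠ k, f k :=
  finsum_comp_equiv (Equiv.addRight a)

lemma finite_support_comp_add_right [Zero M] {f : G → M} (hf : (support f).Finite) (a : G) :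
    (support fun k => f (k + a)).Finite :=
  hf.preimage (add_left_injective a).injOn

end Translate

section ShiftDiffNorm

variable {G : Type*} [AddGroup G] (u : G → ℝ)

noncomputable def shiftDiffNorm (a : G) : ℝ := √(∑ᶠ k, (u (k + a) - u k) ^ 2)

lemma shiftDiffNorm_zero : shiftDiffNorm u 0 = 0 := by
  simp [shiftDiffNorm]

lemma shiftDiffNorm_neg (a : G) : shiftDiffNorm u (-a) = shiftDiffNorm u a := by
  rw [shiftDiffNorm, shiftDiffNorm, ← finsum_comp_add_right _ a]
  congr 1
  refine finsum_congr fun k => ?_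
  rw [add_neg_cancel_right]
  ring

variable {u}

lemma finite_support_shift_sub (hu : (support u).Finite) (a : G) :
    (support fun k => u (k + a) - u k).Finite :=
  ((finite_support_comp_add_right hu a).union hu).subset (support_sub _ _)

lemma shiftDiffNorm_add_le (hu : (support u).Finite) (a b : G) :
    shiftDiffNorm u (a + b) ≤ shiftDiffNorm u a + shiftDiffNorm u b := by
  have hsplit (k : G) : u (k + (a + b)) - u k = (u (k + a + b) - u (k + a)) + (u (k + a) - u k) := by
    rw [add_assoc]; ring
  calc shiftDiffNorm u (a + b)
      = √(∑ᶠ k, ((u (k + a + b) - u (k + a)) + (u (k + a) - u k)) ^ 2) := by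
        simp only [shiftDiffNorm, hsplit]
    _ ≤ √(∑ᶠ k, (u (k + a + b) - u (k + a)) ^ 2) + shiftDiffNorm u a :=
        sqrt_finsum_add_sq_le
          (finite_support_comp_add_right (finite_support_shift_sub hu b) a)
          (finite_support_shift_sub hu a)
    _ = shiftDiffNorm u a + shiftDiffNorm u b := by
        rw [add_comm, shiftDiffNorm,
          finsum_comp_add_right (fun k => (u (k + b) - u k) ^ 2) a]
        rfl

end ShiftDiffNorm

lemma shiftDiffNorm_sum_le {G ι : Type*} [AddCommGroup G] {u : G → ℝ} (hu : (support u).Finite)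
    (s : Finset ι) (a : ι → G) :
    shiftDiffNorm u (∑ i ∈ s, a i) ≤ ∑ i ∈ s, shiftDiffNorm u (a i) :=
  Finset.le_sum_of_subadditive _ (shiftDiffNorm_zero u).le (shiftDiffNorm_add_le hu) s a

lemma shiftDiffNorm_le_sum_single {d : ℕ} {u : (Fin d → ℤ) → ℝ} (hu : (support u).Finite)
    {m : Fin d → ℤ} (hm : m ∈ Finset.Icc (-1) 1) :
    shiftDiffNorm u m ≤ ∑ i, shiftDiffNorm u (Pi.single i 1) := by
  conv_lhs => rw [← Finset.univ_sum_single m]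
  refine (shiftDiffNorm_sum_le hu _ _).trans (Finset.sum_le_sum fun i _ => ?_)
  rw [Finset.mem_Icc] at hm
  have h₁ := hm.1 i
  have h₂ := hm.2 i
  simp only [Pi.neg_apply, Pi.one_apply] at h₁ h₂
  obtain hmi | hmi | hmi : m i = -1 ∨ m i = 0 ∨ m i = 1 := by omega
  · rw [hmi, Pi.single_neg, shiftDiffNorm_neg]
  · rw [hmi, Pi.single_zero, shiftDiffNorm_zero]
    exact Real.sqrt_nonneg _
  · rw [hmi]

section HatInterp

variable {d : ℕ} {h : Fin d → ℝ}

noncomputable def hatInterp (h : Fin d → ℝ) (u : (Fin d → ℤ) → ℝ) (x : Fin d → ℝ) : ℝ :=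
  ∑ᶠ k, u k * hatBasis h k x

lemma hatInterp_eq_sum {u : (Fin d → ℤ) → ℝ} (hu : (support u).Finite) (x : Fin d → ℝ) :
    hatInterp h u x = ∑ k ∈ hu.toFinset, u k * hatBasis h k x :=
  finsum_eq_sum_of_support_subset _
    ((support_mul_subset_left _ _).trans hu.coe_toFinset.symm.subset)

noncomputable def overlapWeight (m : Fin d → ℤ) : ℝ := ∏ i, chiOverlap (m i)

lemma overlapWeight_nonneg (m : Fin d → ℤ) : 0 ≤ overlapWeight m :=
  Finset.prod_nonneg fun i _ => chiOverlap_nonneg (m i)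

lemma support_overlapWeight_subset :
    support (overlapWeight (d := d)) ⊆ Finset.Icc (-1 : Fin d → ℤ) 1 := by
  intro m hm
  have hlt (i : Fin d) : |m i| < 2 := not_le.mp fun h2 =>
    Finset.prod_ne_zero_iff.mp hm i (Finset.mem_univ i) (chiOverlap_eq_zero_of_two_le_abs h2)
  rw [Finset.coe_Icc, Set.mem_Icc]
  exact ⟨fun i => by have := abs_lt.mp (hlt i); simp; omega,
    fun i => by have := abs_lt.mp (hlt i); simp; omega⟩

lemma sum_overlapWeight : ∑ m ∈ Finset.Icc (-1 : Fin d → ℤ) 1, overlapWeight m = 1 := by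
  simp only [Pi.Icc_eq, overlapWeight, ← Finset.prod_univ_sum]
  simp [sum_chiOverlap]

lemma integral_hatInterp_mul (hh : ∀ i, 0 < h i) {u v : (Fin d → ℤ) → ℝ}
    (hu : (support u).Finite) (hv : (support v).Finite) :
    ∫ x, hatInterp h v x * hatInterp h u x
      = (∏ i, h i) * ∑ m ∈ Finset.Icc (-1) 1, overlapWeight m * ∑ᶠ k, v k * u (k + m) := by
  have hinner (k : Fin d → ℤ) : ∑ l ∈ hu.toFinset, u l * overlapWeight (l - k)
      = ∑ m ∈ Finset.Icc (-1) 1, overlapWeight m * u (k + m) := by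
    rw [← finsum_eq_sum_of_support_subset _
        ((support_mul_subset_left _ _).trans hu.coe_toFinset.symm.subset),
      ← finsum_comp_add_right _ k]
    simp only [add_sub_cancel_right]
    rw [finsum_eq_sum_of_support_subset _
      ((support_mul_subset_right _ _).trans support_overlapWeight_subset)]
    exact Finset.sum_congr rfl fun m _ => by rw [add_comm, mul_comm]
  have hpair (m : Fin d → ℤ) : ∑ k ∈ hv.toFinset, v k * u (k + m) = ∑ᶠ k, v k * u (k + m) :=
    (finsum_eq_sum_of_support_subset _
      ((support_mul_subset_left _ _).trans hv.coe_toFinset.symm.subset)).symm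
  calc ∫ x, hatInterp h v x * hatInterp h u x
      = ∫ x, ∑ k ∈ hv.toFinset, ∑ l ∈ hu.toFinset,
          v k * u l * (hatBasis h k x * hatBasis h l x) := by
        congr 1 with x
        rw [hatInterp_eq_sum hv, hatInterp_eq_sum hu, Finset.sum_mul_sum]
        exact Finset.sum_congr rfl fun k _ => Finset.sum_congr rfl fun l _ => by ring
    _ = ∑ k ∈ hv.toFinset, ∑ l ∈ hu.toFinset,
          v k * u l * ((∏ i, h i) * overlapWeight (l - k)) := by
        rw [integral_finsetSum _ fun k _ => integrable_finsetSum _ fun l _ =>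
          (integrable_hatBasis_mul hh k l).const_mul _]
        refine Finset.sum_congr rfl fun k _ => ?_
        rw [integral_finsetSum _ fun l _ => (integrable_hatBasis_mul hh k l).const_mul _]
        refine Finset.sum_congr rfl fun l _ => ?_
        rw [integral_const_mul, integral_hatBasis_mul hh]
        rfl
    _ = (∏ i, h i) * ∑ k ∈ hv.toFinset, v k * ∑ m ∈ Finset.Icc (-1) 1,
          overlapWeight m * u (k + m) := by
        simp only [← hinner, Finset.mul_sum]
        exact Finset.sum_congr rfl fun k _ => Finset.sum_congr rfl fun l _ => by ring
    _ = (∏ i, h i) * ∑ m ∈ Finset.Icc (-1) 1, overlapWeight m * ∑ᶠ k, v k * u (k + m) := by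
        simp only [← hpair, Finset.mul_sum]
        rw [Finset.sum_comm]
        exact Finset.sum_congr rfl fun k _ => Finset.sum_congr rfl fun l _ => by ring


lemma integral_hatInterp_mul_sub (hh : ∀ i, 0 < h i) {u v : (Fin d → ℤ) → ℝ}
    (hu : (support u).Finite) (hv : (support v).Finite) :
    (∫ x, hatInterp h v x * hatInterp h u x) - (∏ i, h i) * ∑ᶠ k, v k * u k
      = (∏ i, h i) * ∑ m ∈ Finset.Icc (-1) 1,
          overlapWeight m * ∑ᶠ k, v k * (u (k + m) - u k) := by
  have hfin (w : (Fin d → ℤ) → ℝ) : (support fun k => v k * w k).Finite :=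
    hv.subset (support_mul_subset_left _ _)
  simp only [mul_sub, finsum_sub_distrib (hfin _) (hfin _)]
  rw [integral_hatInterp_mul hh hu hv, Finset.sum_sub_distrib, ← Finset.sum_mul,
    sum_overlapWeight, one_mul, mul_sub]

lemma abs_integral_hatInterp_mul_sub_le (hh : ∀ i, 0 < h i) {u v : (Fin d → ℤ) → ℝ}
    (hu : (support u).Finite) (hv : (support v).Finite) :
    |(∫ x, hatInterp h v x * hatInterp h u x) - (∏ i, h i) * ∑ᶠ k, v k * u k|
      ≤ √((∏ i, h i) * ∑ᶠ k, v k ^ 2) *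
          ∑ i, √((∏ j, h j) * ∑ᶠ k, (u (k + Pi.single i 1) - u k) ^ 2) := by
  set H := ∏ i, h i
  have hH : 0 < H := Finset.prod_pos fun i _ => hh i
  set X := √(∑ᶠ k, v k ^ 2) * ∑ i, shiftDiffNorm u (Pi.single i 1)
  have hterm (m : Fin d → ℤ) (hm : m ∈ Finset.Icc (-1) 1) :
      |∑ᶠ k, v k * (u (k + m) - u k)| ≤ X :=
    (abs_finsum_mul_le hv (finite_support_shift_sub hu m)).trans
      (mul_le_mul_of_nonneg_left (shiftDiffNorm_le_sum_single hu hm) (Real.sqrt_nonneg _))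
  calc |(∫ x, hatInterp h v x * hatInterp h u x) - H * ∑ᶠ k, v k * u k|
      ≤ H * ∑ m ∈ Finset.Icc (-1) 1, overlapWeight m * X := by
        rw [integral_hatInterp_mul_sub hh hu hv, abs_mul, abs_of_pos hH]
        refine mul_le_mul_of_nonneg_left ((Finset.abs_sum_le_sum_abs _ _).trans
          (Finset.sum_le_sum fun m hm => ?_)) hH.le
        rw [abs_mul, abs_of_nonneg (overlapWeight_nonneg m)]
        exact mul_le_mul_of_nonneg_left (hterm m hm) (overlapWeight_nonneg m)
    _ = √(H * ∑ᶠ k, v k ^ 2) * ∑ i, √(H * ∑ᶠ k, (u (k + Pi.single i 1) - u k) ^ 2) := by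
        have hsqrt : H = √H * √H := (Real.mul_self_sqrt hH.le).symm
        rw [← Finset.sum_mul, sum_overlapWeight, one_mul, Real.sqrt_mul hH.le]
        simp only [Real.sqrt_mul hH.le, ← Finset.mul_sum, X, shiftDiffNorm]
        nth_rw 1 [hsqrt]
        ring

end HatInterp

theorem stmt14_general (d : ℕ) (r : Fin d → ℕ) (hr : ∀ i, 0 < r i)
    (hstep : ℕ → Fin d → ℝ)
    (hstepdef : ∀ n i, hstep n i = (r i : ℝ) * ((2 : ℝ) ^ n)⁻¹)
    (H : ℕ → ℝ) (hH : ∀ n, H n = ∏ i : Fin d, hstep n i)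
    (u v : ℕ → (Fin d → ℤ) → ℝ)
    (hufin : ∀ n, (Function.support (u n)).Finite)
    (hvfin : ∀ n, (Function.support (v n)).Finite)
    (c : ℝ)
    (hvb : ∀ n, H n * ∑ᶠ k : Fin d → ℤ, (v n k) ^ 2 ≤ c)
    (hshift : ∀ i : Fin d,
      Tendsto (fun n => H n * ∑ᶠ k : Fin d → ℤ,
          (u n (k + Pi.single i 1) - u n k) ^ 2) atTop (nhds 0)) :
    Tendsto (fun n =>
        (∫ x : Fin d → ℝ,
            (∑ᶠ k : Fin d → ℤ, v n k * ∏ i : Fin d, chi (x i / hstep n i - (k i : ℝ))) *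
            (∑ᶠ k : Fin d → ℤ, u n k * ∏ i : Fin d, chi (x i / hstep n i - (k i : ℝ))))
          - H n * ∑ᶠ k : Fin d → ℤ, v n k * u n k)
      atTop (nhds 0) := by
  have hpos (n : ℕ) (i : Fin d) : 0 < hstep n i := by
    rw [hstepdef]
    have := hr i
    positivity
  have hbound (n : ℕ) : ‖(∫ x, hatInterp (hstep n) (v n) x * hatInterp (hstep n) (u n) x)
      - H n * ∑ᶠ k, v n k * u n k‖
      ≤ √c * ∑ i, √(H n * ∑ᶠ k, (u n (k + Pi.single i 1) - u n k) ^ 2) := by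
    have := abs_integral_hatInterp_mul_sub_le (hpos n) (hufin n) (hvfin n)
    rw [← hH n] at this
    rw [Real.norm_eq_abs]
    exact this.trans (mul_le_mul_of_nonneg_right (Real.sqrt_le_sqrt (hvb n))
      (Finset.sum_nonneg fun _ _ => Real.sqrt_nonneg _))
  have hlim : Tendsto (fun n => √c * ∑ i, √(H n * ∑ᶠ k, (u n (k + Pi.single i 1) - u n k) ^ 2))
      atTop (nhds 0) := by
    simpa using (tendsto_finsetSum _ fun i _ => (hshift i).sqrt).const_mul √c
  exact squeeze_zero_norm hbound hlim

/-- With grid-steps `hᵢ(n) = rᵢ 2⁻ⁿ` and cell volume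
`Hₙ = ∏ᵢ hᵢ(n)`, if the finitely supported grid functions `uₙ, vₙ` satisfy
uniform `ℓ²` bounds `Hₙ ∑ uₙ² ≤ c`, `Hₙ ∑ vₙ² ≤ c`, and the shifted differences
of `uₙ` tend to `0` in the scaled `ℓ²`-sense, then the difference between the
`L²` pairing of the hat interpolants and the scaled `ℓ²` pairing of the grid
functions tends to `0`. -/
theorem stmt14 (d : ℕ) (hd : 1 ≤ d) (r : Fin d → ℕ) (hr : ∀ i, 0 < r i)
    (hstep : ℕ → Fin d → ℝ)
    (hstepdef : ∀ n i, hstep n i = (r i : ℝ) * ((2 : ℝ) ^ n)⁻¹)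
    (H : ℕ → ℝ) (hH : ∀ n, H n = ∏ i : Fin d, hstep n i)
    (u v : ℕ → (Fin d → ℤ) → ℝ)
    (hufin : ∀ n, (Function.support (u n)).Finite)
    (hvfin : ∀ n, (Function.support (v n)).Finite)
    (c : ℝ) (hc : 0 < c)
    (hub : ∀ n, H n * ∑ᶠ k : Fin d → ℤ, (u n k) ^ 2 ≤ c)
    (hvb : ∀ n, H n * ∑ᶠ k : Fin d → ℤ, (v n k) ^ 2 ≤ c)
    (hshift : ∀ i : Fin d,
      Tendsto (fun n => H n * ∑ᶠ k : Fin d → ℤ,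
          (u n (k + Pi.single i 1) - u n k) ^ 2) atTop (nhds 0)) :
    Tendsto (fun n =>
        (∫ x : Fin d → ℝ,
            (∑ᶠ k : Fin d → ℤ, v n k * ∏ i : Fin d, chi (x i / hstep n i - (k i : ℝ))) *
            (∑ᶠ k : Fin d → ℤ, u n k * ∏ i : Fin d, chi (x i / hstep n i - (k i : ℝ))))
          - H n * ∑ᶠ k : Fin d → ℤ, v n k * u n k)
      atTop (nhds 0) :=
  stmt14_general d r hr hstep hstepdef H hH u v hufin hvfin c hvb hshift
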